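/- Let h : ℝ → ℝ be smooth and g_h the metric on ℝ³ with nonzero components g(∂t,∂t) = g(∂x,∂y) = 1, g(∂x,∂x) = -2h(t). Then the Riemann curvature tensor satisfies R(∂t,∂x,∂x,∂t) = h''(t), and up to the curvature symmetries this is the only nonzero entry on coordinate frames. -/

import Mathlib

/-- The metric g_h on ℝ³ with coordinates (t,x,y) = (p 0, p 1, p 2). -/
noncomputable def gh (h : ℝ → ℝ) (p : Fin 3 → ℝ) (i j : Fin 3) : ℝ :=
  if i = 0 ∧ j = 0 then 1
  else if (i = 1 ∧ j = 2) ∨ (i = 2 ∧ j = 1) then 1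
  else if i = 1 ∧ j = 1 then -2 * h (p 0) else 0

/-- Christoffel symbols of the Levi-Civita connection of `g`. -/
def IsLeviCivita (g : (Fin 3 → ℝ) → Fin 3 → Fin 3 → ℝ)
    (Γ : (Fin 3 → ℝ) → Fin 3 → Fin 3 → Fin 3 → ℝ) : Prop :=
  (∀ p i j k, Γ p i j k = Γ p j i k) ∧
  (∀ (p : Fin 3 → ℝ) (i j k : Fin 3),
    fderiv ℝ (fun q => g q j k) p (Pi.single i 1) =
      (∑ l, Γ p i j l * g p l k) + (∑ l, Γ p i k l * g p j l))

/-- The (0,4) Riemann curvature tensor on coordinate frames. -/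
noncomputable def Riem (g : (Fin 3 → ℝ) → Fin 3 → Fin 3 → ℝ)
    (Γ : (Fin 3 → ℝ) → Fin 3 → Fin 3 → Fin 3 → ℝ)
    (p : Fin 3 → ℝ) (i j k l : Fin 3) : ℝ :=
  ∑ m, (fderiv ℝ (fun q => Γ q j k m) p (Pi.single i 1)
        - fderiv ℝ (fun q => Γ q i k m) p (Pi.single j 1)
        + ∑ n, (Γ p j k n * Γ p i n m - Γ p i k n * Γ p j n m)) * g p m l

/- ### Auxiliary lemmas -/

lemma fderiv_comp_eval (f : ℝ → ℝ) (hf : Differentiable ℝ f) (p : Fin 3 → ℝ) (i : Fin 3) :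
    fderiv ℝ (fun q : Fin 3 → ℝ => f (q 0)) p (Pi.single i 1) =
      (if i = 0 then deriv f (p 0) else 0) := by
  have h1 : HasFDerivAt (fun q : Fin 3 → ℝ => f (q 0))
      ((deriv f (p 0)) • (ContinuousLinearMap.proj 0 : (Fin 3 → ℝ) →L[ℝ] ℝ)) p :=
    ((hf (p 0)).hasDerivAt).comp_hasFDerivAt p
      ((ContinuousLinearMap.proj 0 : (Fin 3 → ℝ) →L[ℝ] ℝ).hasFDerivAt)
  rw [h1.fderiv]
  simp [Pi.single_apply]
  rcases eq_or_ne i 0 with rfl | hi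
  · simp
  · simp [hi, Ne.symm hi]

lemma fderiv_cmul_eval (c : ℝ) (f : ℝ → ℝ) (hf : Differentiable ℝ f) (p : Fin 3 → ℝ)
    (i : Fin 3) :
    fderiv ℝ (fun q : Fin 3 → ℝ => c * f (q 0)) p (Pi.single i 1) =
      (if i = 0 then c * deriv f (p 0) else 0) := by
  have h1 : HasFDerivAt (fun q : Fin 3 → ℝ => c * f (q 0))
      ((c * deriv f (p 0)) • (ContinuousLinearMap.proj 0 : (Fin 3 → ℝ) →L[ℝ] ℝ)) p :=
    (((hf (p 0)).hasDerivAt).const_mul c).comp_hasFDerivAt (h₂ := fun y => c * f y)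
      (f := fun q : Fin 3 → ℝ => q 0) p
      ((ContinuousLinearMap.proj 0 : (Fin 3 → ℝ) →L[ℝ] ℝ).hasFDerivAt)
  rw [h1.fderiv]
  simp [Pi.single_apply]
  rcases eq_or_ne i 0 with rfl | hi
  · simp
  · simp [hi, Ne.symm hi]

lemma fderiv_neg_eval (f : ℝ → ℝ) (hf : Differentiable ℝ f) (p : Fin 3 → ℝ) (i : Fin 3) :
    fderiv ℝ (fun q : Fin 3 → ℝ => -f (q 0)) p (Pi.single i 1) =
      (if i = 0 then -deriv f (p 0) else 0) := by
  have h1 : HasFDerivAt (fun q : Fin 3 → ℝ => -f (q 0))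
      ((-deriv f (p 0)) • (ContinuousLinearMap.proj 0 : (Fin 3 → ℝ) →L[ℝ] ℝ)) p :=
    (((hf (p 0)).hasDerivAt).neg).comp_hasFDerivAt (h₂ := fun y => -f y)
      (f := fun q : Fin 3 → ℝ => q 0) p
      ((ContinuousLinearMap.proj 0 : (Fin 3 → ℝ) →L[ℝ] ℝ).hasFDerivAt)
  rw [h1.fderiv]
  simp [Pi.single_apply]
  rcases eq_or_ne i 0 with rfl | hi
  · simp
  · simp [hi, Ne.symm hi]

lemma gh_symm (h : ℝ → ℝ) (p : Fin 3 → ℝ) (i j : Fin 3) : gh h p i j = gh h p j i := by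
  fin_cases i <;> fin_cases j <;> simp [gh]

lemma hD (h : ℝ → ℝ) (hh : Differentiable ℝ h) (p : Fin 3 → ℝ) (i j k : Fin 3) :
    fderiv ℝ (fun q => gh h q j k) p (Pi.single i 1) =
      if i = 0 ∧ j = 1 ∧ k = 1 then -2 * deriv h (p 0) else 0 := by
  by_cases hc : j = 1 ∧ k = 1
  · obtain ⟨rfl, rfl⟩ := hc
    have he : (fun q => gh h q 1 1) = fun q : Fin 3 → ℝ => -2 * h (q 0) := by
      funext q; simp [gh]
    rw [he, fderiv_cmul_eval (-2) h hh p i]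
    rcases eq_or_ne i 0 with rfl | hi
    · simp
    · simp [hi]
  · have he : (fun q => gh h q j k) = fun _ : Fin 3 → ℝ => gh h p j k := by
      funext q
      simp only [gh]
      split_ifs with h1 h2 h3 <;> first | rfl | exact absurd h3 hc
    rw [he, fderiv_fun_const]
    simp [hc]

lemma gamma_eq (h : ℝ → ℝ) (hh : Differentiable ℝ h)
    (Γ : (Fin 3 → ℝ) → Fin 3 → Fin 3 → Fin 3 → ℝ) (hΓ : IsLeviCivita (gh h) Γ)
    (p : Fin 3 → ℝ) (i j k : Fin 3) :
    Γ p i j k = if i = 1 ∧ j = 1 ∧ k = 0 then deriv h (p 0)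
      else if ((i = 0 ∧ j = 1) ∨ (i = 1 ∧ j = 0)) ∧ k = 2 then -deriv h (p 0) else 0 := by
  obtain ⟨hsym, heq⟩ := hΓ
  set S : Fin 3 → Fin 3 → Fin 3 → ℝ := fun a b c => ∑ l, Γ p a b l * gh h p l c with hSdef
  have hS : ∀ a b c, S a b c + S a c b =
      (if a = 0 ∧ b = 1 ∧ c = 1 then -2 * deriv h (p 0) else 0) := by
    intro a b c
    have h2 : (∑ l, Γ p a c l * gh h p b l) = S a c b := by
      apply Finset.sum_congr rfl
      intro l _
      rw [gh_symm]
    rw [← hD h hh p a b c, heq p a b c, h2, hSdef]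
  have hSsym : ∀ a b c, S a b c = S b a c := by
    intro a b c
    apply Finset.sum_congr rfl
    intro l _
    rw [hsym]
  have key : ∀ a b c, 2 * S a b c =
      (if a = 0 ∧ b = 1 ∧ c = 1 then -2 * deriv h (p 0) else 0)
      + (if b = 0 ∧ a = 1 ∧ c = 1 then -2 * deriv h (p 0) else 0)
      - (if c = 0 ∧ a = 1 ∧ b = 1 then -2 * deriv h (p 0) else 0) := by
    intro a b c
    have e1 := hS a b c
    have e2 := hS b a c
    have e3 := hS c a b
    rw [hSsym b a c] at e2
    rw [hSsym c a b, hSsym c b a] at e3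
    linarith
  have hg00 : gh h p 0 0 = 1 := by simp [gh]
  have hexp : ∀ a b c, S a b c = Γ p a b 0 * gh h p 0 c + Γ p a b 1 * gh h p 1 c
      + Γ p a b 2 * gh h p 2 c := by
    intro a b c; rw [hSdef]; exact Fin.sum_univ_three _
  have hS0 : ∀ a b, S a b 0 = Γ p a b 0 := by
    intro a b; rw [hexp]; simp [gh]
  have hS2 : ∀ a b, S a b 2 = Γ p a b 1 := by
    intro a b; rw [hexp]; simp [gh]
  have hS1 : ∀ a b, S a b 1 = -2 * h (p 0) * Γ p a b 1 + Γ p a b 2 := by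
    intro a b; rw [hexp]; simp [gh]; ring
  have hΓ0 : ∀ a b, Γ p a b 0 = if a = 1 ∧ b = 1 then deriv h (p 0) else 0 := by
    intro a b
    have hk := key a b 0
    rw [hS0] at hk
    clear key hS0 hS1 hS2 hS hSsym hexp hg00 heq hsym
    clear_value S
    clear hSdef S
    fin_cases a <;> fin_cases b <;> simp_all <;> linarith
  have hΓ1 : ∀ a b, Γ p a b 1 = 0 := by
    intro a b
    have hk := key a b 2
    rw [hS2] at hk
    clear key hS0 hS1 hS2 hS hSsym hexp hg00 heq hsym
    clear_value S
    clear hSdef S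
    fin_cases a <;> fin_cases b <;> simp_all <;> linarith
  have hΓ2 : ∀ a b, Γ p a b 2 = if (a = 0 ∧ b = 1) ∨ (a = 1 ∧ b = 0)
      then -deriv h (p 0) else 0 := by
    intro a b
    have hk := key a b 1
    rw [hS1, hΓ1 a b] at hk
    clear key hS0 hS1 hS2 hS hSsym hexp hg00 heq hsym hΓ0 hΓ1
    clear_value S
    clear hSdef S
    fin_cases a <;> fin_cases b <;> simp_all <;> linarith
  have hk3 : k = 0 ∨ k = 1 ∨ k = 2 := by omega
  rcases hk3 with rfl | rfl | rfl
  · rw [hΓ0]; fin_cases i <;> fin_cases j <;> simp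
  · rw [hΓ1]; fin_cases i <;> fin_cases j <;> simp
  · rw [hΓ2]; fin_cases i <;> fin_cases j <;> simp

lemma hDΓ (h : ℝ → ℝ) (Γ : (Fin 3 → ℝ) → Fin 3 → Fin 3 → Fin 3 → ℝ)
    (hd : Differentiable ℝ (deriv h))
    (hg : ∀ p i j k, Γ p i j k = if i = 1 ∧ j = 1 ∧ k = 0 then deriv h (p 0)
      else if ((i = 0 ∧ j = 1) ∨ (i = 1 ∧ j = 0)) ∧ k = 2 then -deriv h (p 0) else 0)
    (p : Fin 3 → ℝ) (i j k m : Fin 3) :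
    fderiv ℝ (fun q => Γ q j k m) p (Pi.single i 1) =
      if i = 0 then
        (if j = 1 ∧ k = 1 ∧ m = 0 then deriv (deriv h) (p 0)
         else if ((j = 0 ∧ k = 1) ∨ (j = 1 ∧ k = 0)) ∧ m = 2 then -(deriv (deriv h) (p 0))
         else 0)
      else 0 := by
  by_cases c1 : j = 1 ∧ k = 1 ∧ m = 0
  · have he : (fun q => Γ q j k m) = fun q : Fin 3 → ℝ => deriv h (q 0) := by
      funext q; rw [hg q j k m, if_pos c1]
    rw [he, fderiv_comp_eval (deriv h) hd p i]
    obtain ⟨rfl, rfl, rfl⟩ := c1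
    rcases eq_or_ne i 0 with rfl | hi
    · simp
    · simp [hi]
  · by_cases c2 : ((j = 0 ∧ k = 1) ∨ (j = 1 ∧ k = 0)) ∧ m = 2
    · have he : (fun q => Γ q j k m) = fun q : Fin 3 → ℝ => -deriv h (q 0) := by
        funext q; rw [hg q j k m, if_neg c1, if_pos c2]
      rw [he, fderiv_neg_eval (deriv h) hd p i]
      rcases eq_or_ne i 0 with rfl | hi
      · simp [c1, c2]
      · simp [hi]
    · have he : (fun q => Γ q j k m) = fun _ : Fin 3 → ℝ => (0:ℝ) := by
        funext q; rw [hg q j k m, if_neg c1, if_neg c2]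
      rw [he, fderiv_fun_const]
      simp [c1, c2]

set_option maxHeartbeats 2000000 in
lemma riem_master (h : ℝ → ℝ) (Γ : (Fin 3 → ℝ) → Fin 3 → Fin 3 → Fin 3 → ℝ)
    (hd : Differentiable ℝ (deriv h))
    (hg : ∀ p i j k, Γ p i j k = if i = 1 ∧ j = 1 ∧ k = 0 then deriv h (p 0)
      else if ((i = 0 ∧ j = 1) ∨ (i = 1 ∧ j = 0)) ∧ k = 2 then -deriv h (p 0) else 0)
    (p : Fin 3 → ℝ) (i j k l : Fin 3) :
    Riem (gh h) Γ p i j k l =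
      if (i = 0 ∧ j = 1 ∧ k = 1 ∧ l = 0) ∨ (i = 1 ∧ j = 0 ∧ k = 0 ∧ l = 1) then
        deriv (deriv h) (p 0)
      else if (i = 0 ∧ j = 1 ∧ k = 0 ∧ l = 1) ∨ (i = 1 ∧ j = 0 ∧ k = 1 ∧ l = 0) then
        -(deriv (deriv h) (p 0))
      else 0 := by
  simp only [Riem, Fin.sum_univ_three]
  simp only [hDΓ h Γ hd hg]
  simp only [hg]
  fin_cases i <;> fin_cases j <;> fin_cases k <;> fin_cases l <;>
    simp [gh]

/-- R(∂t,∂x,∂x,∂t) = h''(t), and up to the curvature symmetries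
this is the only nonzero entry of R on coordinate frames. -/
theorem stmt8 (h : ℝ → ℝ) (hh : ContDiff ℝ (⊤ : ℕ∞) h)
    (Γ : (Fin 3 → ℝ) → Fin 3 → Fin 3 → Fin 3 → ℝ)
    (hΓ : IsLeviCivita (gh h) Γ) :
    ∀ p : Fin 3 → ℝ,
      Riem (gh h) Γ p 0 1 1 0 = deriv^[2] h (p 0) ∧
      ∀ i j k l : Fin 3,
        ¬((i = 0 ∧ j = 1 ∧ k = 1 ∧ l = 0) ∨ (i = 1 ∧ j = 0 ∧ k = 0 ∧ l = 1) ∨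
          (i = 0 ∧ j = 1 ∧ k = 0 ∧ l = 1) ∨ (i = 1 ∧ j = 0 ∧ k = 1 ∧ l = 0)) →
        Riem (gh h) Γ p i j k l = 0 := by
  intro p
  have hh' : ContDiff ℝ ((⊤ : ℕ∞) : WithTop ℕ∞) h := hh.of_le (by simp)
  have hd1 : Differentiable ℝ h := (contDiff_infty_iff_deriv.mp hh').1
  have hd2 : Differentiable ℝ (deriv h) :=
    (contDiff_infty_iff_deriv.mp hh').2.differentiable (by simp)
  have hg : ∀ p i j k, Γ p i j k = if i = 1 ∧ j = 1 ∧ k = 0 then deriv h (p 0)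
      else if ((i = 0 ∧ j = 1) ∨ (i = 1 ∧ j = 0)) ∧ k = 2 then -deriv h (p 0) else 0 :=
    fun p i j k => gamma_eq h hd1 Γ hΓ p i j k
  constructor
  · rw [riem_master h Γ hd2 hg p 0 1 1 0]
    have h2 : deriv^[2] h = deriv (deriv h) := rfl
    rw [h2]
    norm_num
  · intro i j k l hne
    rw [riem_master h Γ hd2 hg p i j k l]
    split_ifs with c1 c2
    · rcases c1 with hc | hc
      · exact absurd (Or.inl hc) hne
      · exact absurd (Or.inr (Or.inl hc)) hne
    · rcases c2 with hc | hc
      · exact absurd (Or.inr (Or.inr (Or.inl hc))) hne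
      · exact absurd (Or.inr (Or.inr (Or.inr hc))) hne
    · rfl
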